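/- The convolution-dilation slicer with unit-norm kernels is a linear functional of Euclidean norm at most 1 (key step in the proof of Proposition 2 for CSW-d): suppose each kernel K^{(1)} ∈ ℝ^{c×2×2}, K^{(h)} ∈ ℝ^{1×2×2} (2 ≤ h ≤ N−1), K^{(N)} ∈ ℝ^{1×a×a} satisfies ‖K^{(h)}‖₂ = 1. Then there exists Θ ∈ ℝ^{c×d×d} with ‖Θ‖₂ ≤ 1 such that CS-d(X|K^{(1)},…,K^{(N)}) = Σ_{h=1}^{c} Σ_{i=1}^{d} Σ_{j=1}^{d} Θ_{h,i,j}·X_{h,i,j} for all X ∈ ℝ^{c×d×d}. In particular, X ↦ CS-d(X|K^{(1)},…,K^{(N)}) is linear and 1-Lipschitz. -/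

import Mathlib

open MeasureTheory ENNReal

noncomputable section

/-- Stride-1, dilation-`m` convolution of a `c' × (2m) × (2m)` tensor with a `c' × 2 × 2` kernel
(one output channel): `Y i j = ∑ h, ∑ i', ∑ j', X h (i + m·i') (j + m·j') * K h i' j'`. -/
def convDil {c' : ℕ} (m : ℕ) (X : Fin c' → Fin (2 * m) → Fin (2 * m) → ℝ)
    (K : Fin c' → Fin 2 → Fin 2 → ℝ) (i j : Fin m) : ℝ :=
  ∑ h : Fin c', ∑ i' : Fin 2, ∑ j' : Fin 2,
    X h ⟨i.1 + m * i'.1, by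
          have h1 := i.isLt
          have h2 : m * i'.1 ≤ m * 1 := Nat.mul_le_mul (le_refl m) (Nat.lt_succ_iff.mp i'.isLt)
          omega⟩
        ⟨j.1 + m * j'.1, by
          have h1 := j.isLt
          have h2 : m * j'.1 ≤ m * 1 := Nat.mul_le_mul (le_refl m) (Nat.lt_succ_iff.mp j'.isLt)
          omega⟩ * K h i' j'

/-- Iterated dilated convolutions (stride 1, dilation equal to half the current spatial size)
with single-channel `1 × 2 × 2` kernels, going from spatial size `2^k * a` down to size `a`;
`Ks 0` is applied first. -/
def midConvDil (a : ℕ) : (k : ℕ) → (Fin k → Fin 1 → Fin 2 → Fin 2 → ℝ) →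
    (Fin (2 ^ k * a) → Fin (2 ^ k * a) → ℝ) → Fin a → Fin a → ℝ
  | 0, _, X, i, j => X (Fin.cast (by ring) i) (Fin.cast (by ring) j)
  | k + 1, Ks, X, i, j =>
      midConvDil a k (fun t => Ks t.succ)
        (convDil (2 ^ k * a)
          (fun _ r s => X (Fin.cast (by ring) r) (Fin.cast (by ring) s))
          (Ks 0)) i j

/-- The space of `c × d × d` images, with the Euclidean (ℓ2) norm. -/
abbrev TensorSpace (c d : ℕ) := EuclideanSpace ℝ (Fin c × Fin d × Fin d)

/-- The convolution-dilation slicer `CS-d(·|K^(1),…,K^(N))` with `N = M + 2` kernels, on images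
of size `c × d × d` where `d = 2^(M+1) * a`: a dilated convolution (stride 1, dilation `d/2`)
with the `c × 2 × 2` kernel `K1`, then `M` dilated convolutions with the `1 × 2 × 2` kernels
`Ks` (at step `h` the dilation is half the current spatial size), then the inner product with
the `1 × a × a` kernel `KN`. -/
def CSd (c a M : ℕ) (K1 : Fin c → Fin 2 → Fin 2 → ℝ)
    (Ks : Fin M → Fin 1 → Fin 2 → Fin 2 → ℝ) (KN : Fin 1 → Fin a → Fin a → ℝ)
    (X : TensorSpace c (2 ^ (M + 1) * a)) : ℝ :=
  ∑ i : Fin a, ∑ j : Fin a,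
    midConvDil a M Ks
      (convDil (2 ^ M * a)
        (fun h r s => X (h, Fin.cast (by ring) r, Fin.cast (by ring) s)) K1) i j * KN 0 i j

/-!
Each dilated convolution is linear, and as `(i, i')` runs over `Fin m × Fin 2` the index
`i + m·i'` runs over `Fin (2m)` exactly once, so the `2 × 2` windows of the output positions tile
the input. Cauchy–Schwarz on each window therefore bounds the squared ℓ2 norm of the output by
`‖K‖₂²` times that of the input. Chaining these bounds through all layers, with unit-norm kernels,
gives `|CS-d(X)| ≤ ‖X‖₂`, and the Riesz representation of this bounded linear functional is the
required `Θ`.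
-/

open Finset

/-- The input index `i + m·i'` that `convDil m` pairs with the kernel index `i'`. -/
def dilIdx (m : ℕ) (i : Fin m) (i' : Fin 2) : Fin (2 * m) := finProdFinEquiv (i', i)

lemma convDil_eq_sum_dilIdx {c' : ℕ} (m : ℕ) (X : Fin c' → Fin (2 * m) → Fin (2 * m) → ℝ)
    (K : Fin c' → Fin 2 → Fin 2 → ℝ) (i j : Fin m) :
    convDil m X K i j =
      ∑ h, ∑ i', ∑ j', X h (dilIdx m i i') (dilIdx m j j') * K h i' j' :=
  rfl

lemma sum_sum_dilIdx {R : Type*} [AddCommMonoid R] (m : ℕ) (f : Fin (2 * m) → R) :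
    ∑ i, ∑ i', f (dilIdx m i i') = ∑ p, f p := by
  rw [Finset.sum_comm, ← Fintype.sum_prod_type']
  exact Equiv.sum_comp finProdFinEquiv f

lemma sum_sum_sum_dilIdx_dilIdx {R : Type*} [AddCommMonoid R] {c' : ℕ} (m : ℕ)
    (G : Fin c' → Fin (2 * m) → Fin (2 * m) → R) :
    ∑ i, ∑ j, ∑ h, ∑ i', ∑ j', G h (dilIdx m i i') (dilIdx m j j') =
      ∑ h, ∑ p, ∑ q, G h p q := by
  calc _ = ∑ h, ∑ i, ∑ i', ∑ j, ∑ j', G h (dilIdx m i i') (dilIdx m j j') := by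
        refine (sum_congr rfl fun i _ => sum_comm).trans (sum_comm.trans ?_)
        exact sum_congr rfl fun h _ => sum_congr rfl fun i _ => sum_comm
    _ = _ := by
        refine sum_congr rfl fun h _ => ?_
        simp only [sum_sum_dilIdx]
        exact sum_sum_dilIdx m (fun p => ∑ q, G h p q)

lemma sum_sum_cast {R : Type*} [AddCommMonoid R] {n n' : ℕ} (h : n' = n)
    (g : Fin n → Fin n → R) :
    ∑ p, ∑ q, g (Fin.cast h p) (Fin.cast h q) = ∑ p, ∑ q, g p q :=
  (sum_congr rfl fun p _ => Equiv.sum_comp (finCongr h) (g (Fin.cast h p))).trans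
    (Equiv.sum_comp (finCongr h) (fun p => ∑ q, g p q))

lemma sq_sum_sum_sum_mul_le {α β γ : Type*} [Fintype α] [Fintype β] [Fintype γ]
    (f g : α → β → γ → ℝ) :
    (∑ a, ∑ b, ∑ c, f a b c * g a b c) ^ 2 ≤
      (∑ a, ∑ b, ∑ c, f a b c ^ 2) * ∑ a, ∑ b, ∑ c, g a b c ^ 2 := by
  simpa only [Fintype.sum_prod_type] using
    sum_mul_sq_le_sq_mul_sq univ (fun x : α × β × γ => f x.1 x.2.1 x.2.2)
      (fun x => g x.1 x.2.1 x.2.2)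

lemma sum_sq_convDil_le {c' : ℕ} (m : ℕ) (X : Fin c' → Fin (2 * m) → Fin (2 * m) → ℝ)
    (K : Fin c' → Fin 2 → Fin 2 → ℝ) :
    ∑ i, ∑ j, convDil m X K i j ^ 2 ≤
      (∑ h, ∑ i', ∑ j', K h i' j' ^ 2) * ∑ h, ∑ p, ∑ q, X h p q ^ 2 := by
  calc ∑ i, ∑ j, convDil m X K i j ^ 2
      ≤ ∑ i, ∑ j, (∑ h, ∑ i', ∑ j', K h i' j' ^ 2) *
          ∑ h, ∑ i', ∑ j', X h (dilIdx m i i') (dilIdx m j j') ^ 2 := by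
        gcongr with i _ j _
        rw [convDil_eq_sum_dilIdx, mul_comm]
        exact sq_sum_sum_sum_mul_le (fun h i' j' => X h (dilIdx m i i') (dilIdx m j j')) K
    _ = _ := by
        simp only [← mul_sum, sum_sum_sum_dilIdx_dilIdx m (fun h p q => X h p q ^ 2)]

lemma convDil_add {c' : ℕ} (m : ℕ) (X Y : Fin c' → Fin (2 * m) → Fin (2 * m) → ℝ)
    (K : Fin c' → Fin 2 → Fin 2 → ℝ) :
    convDil m (X + Y) K = convDil m X K + convDil m Y K := by
  ext i j
  simp only [convDil_eq_sum_dilIdx, Pi.add_apply, add_mul, sum_add_distrib]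

lemma convDil_smul {c' : ℕ} (m : ℕ) (r : ℝ) (X : Fin c' → Fin (2 * m) → Fin (2 * m) → ℝ)
    (K : Fin c' → Fin 2 → Fin 2 → ℝ) :
    convDil m (r • X) K = r • convDil m X K := by
  ext i j
  simp only [convDil_eq_sum_dilIdx, Pi.smul_apply, smul_eq_mul, mul_assoc, mul_sum]

lemma midConvDil_succ (a k : ℕ) (Ks : Fin (k + 1) → Fin 1 → Fin 2 → Fin 2 → ℝ)
    (X : Fin (2 ^ (k + 1) * a) → Fin (2 ^ (k + 1) * a) → ℝ) :
    midConvDil a (k + 1) Ks X = midConvDil a k (fun t => Ks t.succ)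
        (convDil (2 ^ k * a) (fun _ r s => X (Fin.cast (by ring) r) (Fin.cast (by ring) s))
          (Ks 0)) :=
  rfl

lemma midConvDil_add (a : ℕ) : ∀ (k : ℕ) (Ks : Fin k → Fin 1 → Fin 2 → Fin 2 → ℝ)
    (X Y : Fin (2 ^ k * a) → Fin (2 ^ k * a) → ℝ),
    midConvDil a k Ks (X + Y) = midConvDil a k Ks X + midConvDil a k Ks Y
  | 0, _, _, _ => rfl
  | k + 1, Ks, X, Y => by
      rw [midConvDil_succ, midConvDil_succ, midConvDil_succ, ← midConvDil_add, ← convDil_add]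
      rfl

lemma midConvDil_smul (a : ℕ) : ∀ (k : ℕ) (Ks : Fin k → Fin 1 → Fin 2 → Fin 2 → ℝ) (r : ℝ)
    (X : Fin (2 ^ k * a) → Fin (2 ^ k * a) → ℝ),
    midConvDil a k Ks (r • X) = r • midConvDil a k Ks X
  | 0, _, _, _ => rfl
  | k + 1, Ks, r, X => by
      rw [midConvDil_succ, midConvDil_succ, ← midConvDil_smul, ← convDil_smul]
      rfl

lemma sum_sq_midConvDil_le (a : ℕ) : ∀ (k : ℕ) (Ks : Fin k → Fin 1 → Fin 2 → Fin 2 → ℝ),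
    (∀ t, ∑ h, ∑ i, ∑ j, Ks t h i j ^ 2 ≤ 1) →
    ∀ X : Fin (2 ^ k * a) → Fin (2 ^ k * a) → ℝ,
      ∑ i, ∑ j, midConvDil a k Ks X i j ^ 2 ≤ ∑ p, ∑ q, X p q ^ 2
  | 0, _, _, X => (sum_sum_cast (by ring) fun p q => X p q ^ 2).le
  | k + 1, Ks, hKs, X => by
      rw [midConvDil_succ]
      refine (sum_sq_midConvDil_le a k _ (fun t => hKs t.succ) _).trans ?_
      refine (sum_sq_convDil_le _ _ (Ks 0)).trans ?_
      simp only [Fin.sum_univ_one, sum_sum_cast _ fun p q => X p q ^ 2]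
      exact mul_le_of_le_one_left (by positivity) (by simpa only [Fin.sum_univ_one] using hKs 0)

namespace TensorSpace

variable {c a M : ℕ}

def reshape (X : TensorSpace c (2 ^ (M + 1) * a)) :
    Fin c → Fin (2 * (2 ^ M * a)) → Fin (2 * (2 ^ M * a)) → ℝ :=
  fun h r s => X (h, Fin.cast (by ring) r, Fin.cast (by ring) s)

lemma reshape_add (X Y : TensorSpace c (2 ^ (M + 1) * a)) :
    reshape (X + Y) = reshape X + reshape Y :=
  rfl

lemma reshape_smul (r : ℝ) (X : TensorSpace c (2 ^ (M + 1) * a)) :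
    reshape (r • X) = r • reshape X :=
  rfl

lemma sum_sq_reshape (X : TensorSpace c (2 ^ (M + 1) * a)) :
    ∑ h, ∑ p, ∑ q, reshape X h p q ^ 2 = ‖X‖ ^ 2 := by
  rw [EuclideanSpace.norm_sq_eq, Fintype.sum_prod_type]
  refine sum_congr rfl fun h _ => ?_
  simp only [Fintype.sum_prod_type, Real.norm_eq_abs, sq_abs]
  exact sum_sum_cast _ fun p q => X (h, p, q) ^ 2

end TensorSpace

section CSd

variable {c a M : ℕ} (K1 : Fin c → Fin 2 → Fin 2 → ℝ) (Ks : Fin M → Fin 1 → Fin 2 → Fin 2 → ℝ)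
  (KN : Fin 1 → Fin a → Fin a → ℝ)

open TensorSpace

lemma CSd_eq (X : TensorSpace c (2 ^ (M + 1) * a)) :
    CSd c a M K1 Ks KN X =
      ∑ i, ∑ j, midConvDil a M Ks (convDil (2 ^ M * a) (reshape X) K1) i j * KN 0 i j :=
  rfl

lemma CSd_add (X Y : TensorSpace c (2 ^ (M + 1) * a)) :
    CSd c a M K1 Ks KN (X + Y) = CSd c a M K1 Ks KN X + CSd c a M K1 Ks KN Y := by
  simp only [CSd_eq, reshape_add, convDil_add, midConvDil_add, Pi.add_apply, add_mul,
    sum_add_distrib]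

lemma CSd_smul (r : ℝ) (X : TensorSpace c (2 ^ (M + 1) * a)) :
    CSd c a M K1 Ks KN (r • X) = r • CSd c a M K1 Ks KN X := by
  simp only [CSd_eq, reshape_smul, convDil_smul, midConvDil_smul, Pi.smul_apply, smul_eq_mul,
    mul_sum, mul_assoc]

lemma CSd_isLinearMap : IsLinearMap ℝ (CSd c a M K1 Ks KN) :=
  ⟨CSd_add K1 Ks KN, CSd_smul K1 Ks KN⟩

lemma abs_CSd_le_norm (hK1 : ∑ h, ∑ i, ∑ j, K1 h i j ^ 2 ≤ 1)
    (hKs : ∀ t, ∑ h, ∑ i, ∑ j, Ks t h i j ^ 2 ≤ 1) (hKN : ∑ h, ∑ i, ∑ j, KN h i j ^ 2 ≤ 1)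
    (X : TensorSpace c (2 ^ (M + 1) * a)) :
    |CSd c a M K1 Ks KN X| ≤ ‖X‖ := by
  set B := midConvDil a M Ks (convDil (2 ^ M * a) (reshape X) K1)
  have hB : ∑ i, ∑ j, B i j ^ 2 ≤ ‖X‖ ^ 2 := by
    refine (sum_sq_midConvDil_le a M Ks hKs _).trans ((sum_sq_convDil_le _ _ K1).trans ?_)
    rw [sum_sq_reshape]
    exact mul_le_of_le_one_left (by positivity) hK1
  refine abs_le_of_sq_le_sq ?_ (norm_nonneg X)
  calc CSd c a M K1 Ks KN X ^ 2 = (∑ h : Fin 1, ∑ i, ∑ j, B i j * KN h i j) ^ 2 := by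
        rw [Fin.sum_univ_one]; rfl
    _ ≤ (∑ h : Fin 1, ∑ i, ∑ j, B i j ^ 2) * ∑ h, ∑ i, ∑ j, KN h i j ^ 2 :=
        sq_sum_sum_sum_mul_le _ _
    _ ≤ ‖X‖ ^ 2 := by
        rw [Fin.sum_univ_one]
        exact mul_le_of_le_one_right (by positivity) hKN |>.trans hB

end CSd

theorem LinearMap.exists_norm_le_one_eq_inner {E : Type*} [NormedAddCommGroup E]
    [InnerProductSpace ℝ E] [CompleteSpace E] (f : E →ₗ[ℝ] ℝ) (hf : ∀ x, |f x| ≤ ‖x‖) :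
    ∃ Θ : E, ‖Θ‖ ≤ 1 ∧ ∀ x, f x = inner ℝ Θ x := by
  let ℓ := f.mkContinuous 1 fun x => by simpa using hf x
  refine ⟨(InnerProductSpace.toDual ℝ E).symm ℓ, ?_, fun x => ?_⟩
  · rw [LinearIsometryEquiv.norm_map]
    exact f.mkContinuous_norm_le zero_le_one _
  · rw [InnerProductSpace.toDual_symm_apply]
    rfl

theorem CSd_linear_functional_general (c a M : ℕ)
    (K1 : Fin c → Fin 2 → Fin 2 → ℝ) (Ks : Fin M → Fin 1 → Fin 2 → Fin 2 → ℝ)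
    (KN : Fin 1 → Fin a → Fin a → ℝ)
    (hK1 : Real.sqrt (∑ h : Fin c, ∑ i : Fin 2, ∑ j : Fin 2, K1 h i j ^ 2) = 1)
    (hKs : ∀ t : Fin M,
      Real.sqrt (∑ h : Fin 1, ∑ i : Fin 2, ∑ j : Fin 2, Ks t h i j ^ 2) = 1)
    (hKN : Real.sqrt (∑ h : Fin 1, ∑ i : Fin a, ∑ j : Fin a, KN h i j ^ 2) = 1) :
    ∃ Θ : TensorSpace c (2 ^ (M + 1) * a), ‖Θ‖ ≤ 1 ∧
      (∀ X : TensorSpace c (2 ^ (M + 1) * a),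
        CSd c a M K1 Ks KN X =
          ∑ h : Fin c, ∑ i : Fin (2 ^ (M + 1) * a), ∑ j : Fin (2 ^ (M + 1) * a),
            Θ (h, i, j) * X (h, i, j)) ∧
      IsLinearMap ℝ (CSd c a M K1 Ks KN) ∧ LipschitzWith 1 (CSd c a M K1 Ks KN) := by
  have hlin := CSd_isLinearMap K1 Ks KN
  have hbound := abs_CSd_le_norm K1 Ks KN (Real.sqrt_eq_one.mp hK1).le
    (fun t => (Real.sqrt_eq_one.mp (hKs t)).le) (Real.sqrt_eq_one.mp hKN).le
  let f := IsLinearMap.mk' _ hlin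
  obtain ⟨Θ, hΘ, hf⟩ := f.exists_norm_le_one_eq_inner hbound
  refine ⟨Θ, hΘ, fun X => ?_, hlin,
    AddMonoidHomClass.lipschitz_of_bound_nnnorm f 1 fun X => ?_⟩
  · rw [← IsLinearMap.mk'_apply hlin X, hf, PiLp.inner_apply]
    simp only [Fintype.sum_prod_type, RCLike.inner_apply, conj_trivial, mul_comm]
  · rw [one_mul, ← NNReal.coe_le_coe, coe_nnnorm, coe_nnnorm, Real.norm_eq_abs]
    exact hbound X

/-- The convolution-dilation slicer with unit-norm kernels is a linear functional of Euclidean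
norm at most 1: there is `Θ ∈ ℝ^{c×d×d}` with `‖Θ‖₂ ≤ 1` such that
`CS-d(X|K^(1),…,K^(N)) = ∑_{h,i,j} Θ_{h,i,j} X_{h,i,j}`; in particular the slicer is linear and
1-Lipschitz. Here `d = 2^(M+1)·a`, i.e. `N = M + 2 ≥ 2`. -/
theorem CSd_linear_functional (c a M : ℕ) (hc : 1 ≤ c) (ha : 1 ≤ a)
    (K1 : Fin c → Fin 2 → Fin 2 → ℝ) (Ks : Fin M → Fin 1 → Fin 2 → Fin 2 → ℝ)
    (KN : Fin 1 → Fin a → Fin a → ℝ)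
    (hK1 : Real.sqrt (∑ h : Fin c, ∑ i : Fin 2, ∑ j : Fin 2, K1 h i j ^ 2) = 1)
    (hKs : ∀ t : Fin M,
      Real.sqrt (∑ h : Fin 1, ∑ i : Fin 2, ∑ j : Fin 2, Ks t h i j ^ 2) = 1)
    (hKN : Real.sqrt (∑ h : Fin 1, ∑ i : Fin a, ∑ j : Fin a, KN h i j ^ 2) = 1) :
    ∃ Θ : TensorSpace c (2 ^ (M + 1) * a), ‖Θ‖ ≤ 1 ∧
      (∀ X : TensorSpace c (2 ^ (M + 1) * a),
        CSd c a M K1 Ks KN X =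
          ∑ h : Fin c, ∑ i : Fin (2 ^ (M + 1) * a), ∑ j : Fin (2 ^ (M + 1) * a),
            Θ (h, i, j) * X (h, i, j)) ∧
      IsLinearMap ℝ (CSd c a M K1 Ks KN) ∧ LipschitzWith 1 (CSd c a M K1 Ks KN) :=
  CSd_linear_functional_general c a M K1 Ks KN hK1 hKs hKN
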